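/- arXiv:0810.4657 — 2 statements merged into one kernel-verified Lean document; each statement's English description precedes it below -/
import Mathlib

section
/- Let C(x) = (1/2)log₂(1+x) and let P > 0 be the total power. Then for any h₁₃, h₂₃, P₂, t > 0, the map P₁ₚ ↦ t·C((h₁₃²·P₁ₚ + (h₁₃·√(P−P₁ₚ) + h₂₃·√P₂)²)/t) is nonincreasing in P₁ₚ on [0,P]. -/
noncomputable def gaussC (x : ℝ) : ℝ := (1 / 2) * Real.logb 2 (1 + x)

theorem ddf_sum_rate_antitone (h13 h23 P2 t P : ℝ)
    (hh13 : 0 < h13) (hh23 : 0 < h23) (hP2 : 0 < P2) (ht : 0 < t) (hP : 0 < P) :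
    AntitoneOn
      (fun P1p : ℝ =>
        t * gaussC ((h13 ^ 2 * P1p +
          (h13 * Real.sqrt (P - P1p) + h23 * Real.sqrt P2) ^ 2) / t))
      (Set.Icc (0 : ℝ) P) := by
  have key : ∀ p ∈ Set.Icc (0:ℝ) P,
      h13 ^ 2 * p + (h13 * Real.sqrt (P - p) + h23 * Real.sqrt P2) ^ 2
      = h13 ^ 2 * P + h23 ^ 2 * P2 + 2 * h13 * h23 * Real.sqrt P2 * Real.sqrt (P - p) := by
    intro p hp
    have h1 : Real.sqrt (P - p) ^ 2 = P - p := Real.sq_sqrt (by linarith [hp.2])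
    have h2 : Real.sqrt P2 ^ 2 = P2 := Real.sq_sqrt hP2.le
    linear_combination h13 ^ 2 * h1 + h23 ^ 2 * h2
  intro a ha b hb hab
  simp only [gaussC, key a ha, key b hb]
  have hsb : Real.sqrt (P - b) ≤ Real.sqrt (P - a) := Real.sqrt_le_sqrt (by linarith)
  have hsa : (0:ℝ) ≤ Real.sqrt (P - a) := Real.sqrt_nonneg _
  have hsb0 : (0:ℝ) ≤ Real.sqrt (P - b) := Real.sqrt_nonneg _
  have hsP2 : (0:ℝ) ≤ Real.sqrt P2 := Real.sqrt_nonneg _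
  have hE : (0:ℝ) ≤ h13 ^ 2 * P + h23 ^ 2 * P2 + 2 * h13 * h23 * Real.sqrt P2 * Real.sqrt (P - b) := by
    positivity
  gcongr
  · have : (0:ℝ) < 1 + (h13 ^ 2 * P + h23 ^ 2 * P2 + 2 * h13 * h23 * Real.sqrt P2 * Real.sqrt (P - b)) / t := by
      positivity
    linarith
end

section
/- In the symmetric Gaussian half-duplex parallel relay channel with h₀₁ = h₀₂, h₁₃ = h₂₃, P₁ = P₂, t₁ = t₂ = 1/2, P₀⁽¹⁾ = P₀⁽²⁾ = P₀/2, and β₁ = β₂ = 1/2, the BME backward-decoding rate C_BME ≤ min(C(h₀₁²P₀/2), C(2h₁₃²P₁)) is at most the DPC rate C_DPC = min(C(h₀₁²P₀), (1/2)C(h₀₁²P₀) + (1/2)C(2h₁₃²P₁), C(2h₁₃²P₁)), where C(x) = (1/2)log₂(1+x). -/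
open Set

lemma gaussC_monotoneOn : MonotoneOn gaussC (Ioi (-1)) := by
  intro x hx y _ hxy
  have hx' : (0 : ℝ) < 1 + x := by linarith [mem_Ioi.mp hx]
  unfold gaussC
  gcongr
  linarith

lemma gaussC_half_le {a : ℝ} (ha : 0 ≤ a) : gaussC (a / 2) ≤ gaussC a :=
  gaussC_monotoneOn (by simp only [mem_Ioi]; linarith) (by simp only [mem_Ioi]; linarith)
    (by linarith)

lemma min_le_min_min_midpoint {x y z : ℝ} (hxy : x ≤ y) :
    min x z ≤ min y (min ((1 / 2) * y + (1 / 2) * z) z) := by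
  have hy : min x z ≤ y := (min_le_left x z).trans hxy
  have hz : min x z ≤ z := min_le_right x z
  exact le_min hy (le_min (by linarith) hz)

theorem bme_le_dpc_symmetric_general (h01 h13 P0 P1 : ℝ)
    (hP0 : 0 < P0) :
    min (gaussC (h01 ^ 2 * P0 / 2)) (gaussC (2 * h13 ^ 2 * P1)) ≤
      min (gaussC (h01 ^ 2 * P0))
        (min ((1 / 2) * gaussC (h01 ^ 2 * P0) + (1 / 2) * gaussC (2 * h13 ^ 2 * P1))
          (gaussC (2 * h13 ^ 2 * P1))) :=
  min_le_min_min_midpoint (gaussC_half_le (by positivity))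

/-- In the symmetric scenario, the BME backward-decoding rate bound is at most the DPC rate. -/
theorem bme_le_dpc_symmetric (h01 h13 P0 P1 : ℝ)
    (hh01 : 0 < h01) (hh13 : 0 < h13) (hP0 : 0 < P0) (hP1 : 0 < P1) :
    min (gaussC (h01 ^ 2 * P0 / 2)) (gaussC (2 * h13 ^ 2 * P1)) ≤
      min (gaussC (h01 ^ 2 * P0))
        (min ((1 / 2) * gaussC (h01 ^ 2 * P0) + (1 / 2) * gaussC (2 * h13 ^ 2 * P1))
          (gaussC (2 * h13 ^ 2 * P1))) :=
  bme_le_dpc_symmetric_general h01 h13 P0 P1 hP0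
end
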